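/- arXiv:1411.0084 — 7 statements merged into one kernel-verified Lean document; each statement's English description precedes it below -/
import Mathlib

section
/- There exists a function i : ℕ × ℕ × ℕ → ℕ with i(n,l,k) > 0 (defined for 0 < l and k < l) such that for every n, every 0 < l, every 0 < m ≤ l, and every sequence of finite sets ⟨F_k : k < m⟩ with |F_k| = i(n+1,l,k), whenever the product ∏_{k<m} F_k is partitioned into two pieces X_0 ∪ X_1, there exist j ∈ {0,1} and subsets E_k ⊆ F_k with |E_k| = i(n,l,k) for all k < m such that ∏_{k<m} E_k ⊆ X_j. -/
/-- The product set `∏_{k<m} F k`, encoded as the set of functions `s : ℕ → ℕ`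
with `s k ∈ F k` for `k < m` and `s k = 0` for `k ≥ m`. -/
def prodSet (F : ℕ → Finset ℕ) (m : ℕ) : Set (ℕ → ℕ) :=
  {s | (∀ k, k < m → s k ∈ F k) ∧ ∀ k, m ≤ k → s k = 0}

/-!
Induct on the number `m` of factors. Colour each `a ∈ F m` by the set of points `s` of the
product of the first `m` factors for which `s` extended by `a` lies in `X₀`. There are at most
`2 ^ ∏_{j<m} |F j|` colours, so if `|F m| ≥ 2 ^ ∏_{j<m} |F j| * f m` some colour class `A` has
`f m` elements; on `(∏_{j<m} F j) × A` membership in `X₀` depends only on the first `m`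
coordinates, and the induction hypothesis applied to that colouring finishes the proof.
Iterating `f ↦ g`, where `g k = 2 ^ (∏_{j<k} g j) * f k`, from the constant `1` gives the sizes.
-/

open Finset Function

section prodSet

variable {E F : ℕ → Finset ℕ} {m : ℕ}

lemma prodSet_zero (F : ℕ → Finset ℕ) : prodSet F 0 = {0} := by
  ext s
  simp only [prodSet, Set.mem_ofPred_eq, Set.mem_singleton_iff, funext_iff, Pi.zero_apply]
  exact ⟨fun hs k => hs.2 k k.zero_le, fun hs => ⟨fun k hk => absurd hk k.not_lt_zero, fun k _ => hs k⟩⟩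

lemma prodSet_mono (h : ∀ k < m, E k ⊆ F k) : prodSet E m ⊆ prodSet F m :=
  fun _ hs => ⟨fun k hk => h k hk (hs.1 k hk), hs.2⟩

lemma prodSet_congr (h : ∀ k < m, E k = F k) : prodSet E m = prodSet F m :=
  (prodSet_mono fun k hk => (h k hk).le).antisymm (prodSet_mono fun k hk => (h k hk).ge)

lemma mem_prodSet_succ {s : ℕ → ℕ} :
    s ∈ prodSet F (m + 1) ↔ update s m 0 ∈ prodSet F m ∧ s m ∈ F m := by
  constructor
  · rintro ⟨hlt, hge⟩
    refine ⟨⟨fun k hk => ?_, fun k hk => ?_⟩, hlt m m.lt_succ_self⟩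
    · rw [update_of_ne hk.ne]
      exact hlt k (Nat.lt_succ_of_lt hk)
    · rcases hk.eq_or_lt with rfl | hk
      · exact update_self ..
      · rw [update_of_ne hk.ne']
        exact hge k hk
  · rintro ⟨⟨hlt, hge⟩, hm⟩
    refine ⟨fun k hk => ?_, fun k hk => ?_⟩
    · rcases (Nat.lt_succ_iff.1 hk).lt_or_eq with hk | rfl
      · simpa [update_of_ne hk.ne] using hlt k hk
      · exact hm
    · simpa [update_of_ne (Nat.succ_le_iff.1 hk).ne'] using hge k (Nat.le_of_succ_le hk)

lemma exists_finset_prodSet_subset_card_le (F : ℕ → Finset ℕ) (m : ℕ) :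
    ∃ T : Finset (ℕ → ℕ), prodSet F m ⊆ T ∧ #T ≤ ∏ j ∈ range m, #(F j) := by
  classical
  let extend : (Fin m → ℕ) → ℕ → ℕ := fun t k => if h : k < m then t ⟨k, h⟩ else 0
  refine ⟨(Fintype.piFinset fun j : Fin m => F j).image extend, fun s hs => ?_, ?_⟩
  · refine mem_image.2 ⟨fun j => s j, Fintype.mem_piFinset.2 fun j => hs.1 j j.isLt, ?_⟩
    funext k
    by_cases hk : k < m
    · simp [extend, hk]
    · simp [extend, hk, hs.2 k (not_lt.1 hk)]
  · calc _ ≤ #(Fintype.piFinset fun j : Fin m => F j) := card_image_le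
      _ = ∏ j ∈ range m, #(F j) := by
        rw [Fintype.card_piFinset, Fin.prod_univ_eq_prod_range (fun j => #(F j))]

end prodSet

lemma exists_subset_card_eq_forall_update_mem_iff {F : ℕ → Finset ℕ} {m n : ℕ}
    (hF : 2 ^ (∏ j ∈ range m, #(F j)) * n ≤ #(F m)) (X₀ : Set (ℕ → ℕ)) :
    ∃ Y : Set (ℕ → ℕ), ∃ A ⊆ F m, #A = n ∧
      ∀ a ∈ A, ∀ s ∈ prodSet F m, update s m a ∈ X₀ ↔ s ∈ Y := by
  classical
  obtain ⟨T, hFT, hT⟩ := exists_finset_prodSet_subset_card_le F m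
  let colour : ℕ → Finset (ℕ → ℕ) := fun a => T.filter fun s => update s m a ∈ X₀
  have hcard : #T.powerset * n ≤ #(F m) := by
    rw [card_powerset]
    exact le_trans (Nat.mul_le_mul_right _ (Nat.pow_le_pow_right two_pos hT)) hF
  obtain ⟨Y, -, hY⟩ := exists_le_card_fiber_of_mul_le_card_of_maps_to (f := colour)
    (fun a _ => mem_powerset.2 (filter_subset _ T)) (powerset_nonempty T) hcard
  obtain ⟨A, hAY, hA⟩ := exists_subset_card_eq hY
  refine ⟨Y, A, hAY.trans (filter_subset _ _), hA, fun a ha s hs => ?_⟩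
  rw [← (mem_filter.1 (hAY ha)).2]
  simp [colour, mem_coe.1 (hFT hs)]

theorem exists_homogeneous_subproduct (f : ℕ → ℕ) (F : ℕ → Finset ℕ) (m : ℕ)
    (hF : ∀ k < m, 2 ^ (∏ j ∈ range k, #(F j)) * f k ≤ #(F k))
    (X₀ X₁ : Set (ℕ → ℕ)) (hcover : prodSet F m ⊆ X₀ ∪ X₁) :
    ∃ E : ℕ → Finset ℕ, (∀ k < m, E k ⊆ F k ∧ #(E k) = f k) ∧
      (prodSet E m ⊆ X₀ ∨ prodSet E m ⊆ X₁) := by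
  induction m generalizing X₀ X₁ with
  | zero =>
    refine ⟨F, fun k hk => absurd hk k.not_lt_zero, ?_⟩
    rw [prodSet_zero] at hcover ⊢
    simpa only [Set.singleton_subset_iff, Set.mem_union] using hcover
  | succ m ih =>
    obtain ⟨Y, A, hAF, hA, hAY⟩ :=
      exists_subset_card_eq_forall_update_mem_iff (hF m m.lt_succ_self) X₀
    obtain ⟨E, hEF, hEY⟩ :=
      ih (fun k hk => hF k (Nat.lt_succ_of_lt hk)) Y Yᶜ fun s _ => em (s ∈ Y)
    have hE : ∀ k < m, update E m A k = E k := fun k hk => update_of_ne hk.ne _ _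
    have hmem : ∀ s ∈ prodSet (update E m A) (m + 1), update s m 0 ∈ prodSet E m ∧
        s ∈ prodSet F (m + 1) ∧ (s ∈ X₀ ↔ update s m 0 ∈ Y) := by
      intro s hs
      rw [mem_prodSet_succ, prodSet_congr hE, update_self] at hs
      have hsF : update s m 0 ∈ prodSet F m := prodSet_mono (fun k hk => (hEF k hk).1) hs.1
      refine ⟨hs.1, mem_prodSet_succ.2 ⟨hsF, hAF hs.2⟩, ?_⟩
      rw [← hAY _ hs.2 _ hsF, update_idem, update_eq_self]
    refine ⟨update E m A, fun k hk => ?_, ?_⟩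
    · rcases (Nat.lt_succ_iff.1 hk).lt_or_eq with hk | rfl
      · rw [hE k hk]
        exact hEF k hk
      · rw [update_self]
        exact ⟨hAF, hA⟩
    · rcases hEY with hEY | hEY
      · refine Or.inl fun s hs => ?_
        obtain ⟨hsE, -, hX₀⟩ := hmem s hs
        exact hX₀.2 (hEY hsE)
      · refine Or.inr fun s hs => ?_
        obtain ⟨hsE, hsF, hX₀⟩ := hmem s hs
        exact (hcover hsF).resolve_left fun h => hEY hsE (hX₀.1 h)

def stepSize (f : ℕ → ℕ) (k : ℕ) : ℕ := 2 ^ (∏ j : Fin k, stepSize f j) * f k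
decreasing_by exact j.isLt

lemma stepSize_eq (f : ℕ → ℕ) (k : ℕ) :
    stepSize f k = 2 ^ (∏ j ∈ range k, stepSize f j) * f k := by
  rw [stepSize, Fin.prod_univ_eq_prod_range (stepSize f)]

def ramseySize (n : ℕ) : ℕ → ℕ := stepSize^[n] fun _ => 1

lemma ramseySize_succ (n : ℕ) : ramseySize (n + 1) = stepSize (ramseySize n) :=
  iterate_succ_apply' ..

lemma ramseySize_pos (n k : ℕ) : 0 < ramseySize n k := by
  induction n generalizing k with
  | zero => exact Nat.one_pos
  | succ n ih =>
    rw [ramseySize_succ, stepSize_eq]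
    exact Nat.mul_pos (Nat.two_pow_pos _) (ih k)

/-- Polarized Ramsey theorem for finite products of finite sets. -/
theorem polarized_partition :
    ∃ i : ℕ → ℕ → ℕ → ℕ,
      (∀ n l k, 0 < l → k < l → 0 < i n l k) ∧
      (∀ n l m, 0 < l → 0 < m → m ≤ l →
        ∀ F : ℕ → Finset ℕ, (∀ k, k < m → (F k).card = i (n + 1) l k) →
          ∀ X₀ X₁ : Set (ℕ → ℕ), prodSet F m ⊆ X₀ ∪ X₁ →
            ∃ E : ℕ → Finset ℕ,
              (∀ k, k < m → E k ⊆ F k ∧ (E k).card = i n l k) ∧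
              (prodSet E m ⊆ X₀ ∨ prodSet E m ⊆ X₁)) := by
  refine ⟨fun n _ k => ramseySize n k, fun n _ k _ _ => ramseySize_pos n k, ?_⟩
  intro n _ m _ _ _ F hF X₀ X₁ hcover
  refine exists_homogeneous_subproduct _ F m (fun k hk => ?_) X₀ X₁ hcover
  have hprod : ∏ j ∈ range k, #(F j) = ∏ j ∈ range k, ramseySize (n + 1) j :=
    prod_congr rfl fun j hj => hF j ((mem_range.1 hj).trans hk)
  dsimp only at hF ⊢
  rw [hprod, hF k hk, ramseySize_succ, stepSize_eq]
end

section
/- Let A be a non-empty finite set with l = 2^{|A|}, and let ⟨s_k : k < l⟩ enumerate all subsets of A so that k' < k implies s_k ⊄ s_{k'}. For a ⊆ A let D_a = {k < l : s_k ⊆ a}. Then for each n ∈ ℕ and each sequence of sets ⟨F_k : k < l⟩ with |F_k| = i(n,l,k) (where i is the function from the polarized partition lemma), the structure u defined by u_a = ∏{F_k : k ∈ D_a} and π_{u,b,a}(s) = s ↾ D_a is a creature acting on A with nor(u) ≥ n. In particular, there exist creatures acting on A of arbitrarily high norm. -/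
open scoped Classical


/-- A creature acting on a non-empty finite set `A ⊆ ℕ`: a family of non-empty
finite sets `val a` for `a ⊆ A` together with commuting surjective projections
`proj b a : val b → val a` for `a ⊆ b ⊆ A`. -/
structure Creature (α : Type*) (A : Finset ℕ) where
  val : Finset ℕ → Set α
  proj : Finset ℕ → Finset ℕ → α → α
  finite : ∀ a, a ⊆ A → (val a).Finite
  nonempty : ∀ a, a ⊆ A → (val a).Nonempty
  mapsTo : ∀ a b, a ⊆ b → b ⊆ A → Set.MapsTo (proj b a) (val b) (val a)
  surjOn : ∀ a b, a ⊆ b → b ⊆ A → Set.SurjOn (proj b a) (val b) (val a)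
  comp : ∀ a b c, a ⊆ b → b ⊆ c → c ⊆ A → ∀ x ∈ val c,
    proj c a x = proj b a (proj c b x)

/-- `SubCreature v u` formalizes `v ∈ Σ(u)`: `v` is a coordinate-wise restriction of `u`. -/
def SubCreature {α : Type*} {A : Finset ℕ} (v u : Creature α A) : Prop :=
  (∀ a, a ⊆ A → v.val a ⊆ u.val a) ∧
  ∀ a b, a ⊆ b → b ⊆ A → ∀ x ∈ v.val b, v.proj b a x = u.proj b a x

/-- `NormGe n u` formalizes `nor(u) ≥ n`. -/
def NormGe {α : Type*} {A : Finset ℕ} : ℕ → Creature α A → Prop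
  | 0, _ => True
  | n + 1, u =>
      (∀ a, a ⊆ A → ∀ u0 u1 : Set α, u.val a = u0 ∪ u1 →
        ∃ v : Creature α A, SubCreature v u ∧ NormGe n v ∧ (v.val a ⊆ u0 ∨ v.val a ⊆ u1)) ∧
      (∀ a b, a ⊆ A → b ⊆ A → ¬b ⊆ a → ∀ F : Set α → α,
        (∀ t, t ⊆ u.val a → F t ∈ u.val b) →
          ∃ v : Creature α A, SubCreature v u ∧ NormGe n v ∧ ∀ t, t ⊆ v.val a → F t ∉ v.val b)

/-- `D s l a = {k < l : s k ⊆ a}`. -/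
def Dset (s : ℕ → Finset ℕ) (l : ℕ) (a : Finset ℕ) : Finset ℕ :=
  (Finset.range l).filter fun k => s k ⊆ a

/-- The product `∏ {F k : k ∈ D_a}`, encoded as functions vanishing off `D_a`. -/
def prodOn (F : ℕ → Finset ℕ) (D : Finset ℕ) : Set (ℕ → ℕ) :=
  {f | (∀ k ∈ D, f k ∈ F k) ∧ ∀ k, k ∉ D → f k = 0}

lemma mem_Dset {s : ℕ → Finset ℕ} {l : ℕ} {a : Finset ℕ} {k : ℕ} :
    k ∈ Dset s l a ↔ k < l ∧ s k ⊆ a := by simp [Dset]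

lemma Dset_subset_range (s : ℕ → Finset ℕ) (l : ℕ) (a : Finset ℕ) :
    Dset s l a ⊆ Finset.range l := Finset.filter_subset _ _

lemma Dset_lt {s : ℕ → Finset ℕ} {l : ℕ} {a : Finset ℕ} {k : ℕ} (h : k ∈ Dset s l a) :
    k < l := (mem_Dset.mp h).1

lemma Dset_mono {s : ℕ → Finset ℕ} {l : ℕ} {a b : Finset ℕ} (h : a ⊆ b) :
    Dset s l a ⊆ Dset s l b := by
  intro k hk; rw [mem_Dset] at *; exact ⟨hk.1, hk.2.trans h⟩

noncomputable def prodFin (F : ℕ → Finset ℕ) (D : Finset ℕ) : Finset (ℕ → ℕ) :=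
  (D.pi F).image fun g k => if h : k ∈ D then g k h else 0

lemma prodOn_eq_prodFin (F : ℕ → Finset ℕ) (D : Finset ℕ) :
    prodOn F D = ↑(prodFin F D) := by
  ext f
  simp only [prodOn, Set.mem_setOf_eq, prodFin, Finset.coe_image, Set.mem_image,
    Finset.mem_coe, Finset.mem_pi]
  constructor
  · rintro ⟨h1, h2⟩
    refine ⟨fun k _ => f k, fun k hk => h1 k hk, ?_⟩
    funext k
    by_cases h : k ∈ D
    · rw [dif_pos h]
    · rw [dif_neg h]; exact (h2 k h).symm
  · rintro ⟨g, hg, rfl⟩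
    constructor
    · intro k hk; simp only [dif_pos hk]; exact hg k hk
    · intro k hk; simp [dif_neg hk]

lemma prodFin_card (F : ℕ → Finset ℕ) (D : Finset ℕ) :
    (prodFin F D).card ≤ ∏ k ∈ D, (F k).card := by
  unfold prodFin
  calc ((D.pi F).image fun g k => if h : k ∈ D then g k h else 0).card ≤ (D.pi F).card :=
      Finset.card_image_le
    _ = ∏ k ∈ D, (F k).card := Finset.card_pi _ _

lemma prodOn_mono {E F : ℕ → Finset ℕ} {D : Finset ℕ} (h : ∀ k ∈ D, E k ⊆ F k) :
    prodOn E D ⊆ prodOn F D := by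
  rintro f ⟨h1, h2⟩
  exact ⟨fun k hk => h k hk (h1 k hk), h2⟩

lemma prodOn_congr {E F : ℕ → Finset ℕ} {D : Finset ℕ} (h : ∀ k ∈ D, E k = F k) :
    prodOn E D = prodOn F D :=
  le_antisymm (prodOn_mono fun k hk => (h k hk).le) (prodOn_mono fun k hk => (h k hk).ge)

noncomputable def U (s : ℕ → Finset ℕ) (l : ℕ) (A : Finset ℕ) (F : ℕ → Finset ℕ)
    (hne : ∀ k, k < l → (F k).Nonempty) : Creature (ℕ → ℕ) A where
  val a := prodOn F (Dset s l a)
  proj _ a f := fun k => if k ∈ Dset s l a then f k else 0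
  finite a _ := by
    rw [prodOn_eq_prodFin]
    exact (prodFin F (Dset s l a)).finite_toSet
  nonempty a _ := by
    refine ⟨fun k => if h : k ∈ Dset s l a then (hne k (Dset_lt h)).choose else 0, ?_, ?_⟩
    · intro k hk
      simp only [dif_pos hk]
      exact (hne k (Dset_lt hk)).choose_spec
    · intro k hk; simp [dif_neg hk]
  mapsTo a b hab _ := by
    intro f hf
    dsimp only at hf ⊢
    constructor
    · intro k hk
      simp only [if_pos hk]
      exact hf.1 k (Dset_mono hab hk)
    · intro k hk; simp only [if_neg hk]
  surjOn a b hab _ := by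
    intro g hg
    refine ⟨fun k => if k ∈ Dset s l a then g k else
        if h : k ∈ Dset s l b then (hne k (Dset_lt h)).choose else 0, ⟨?_, ?_⟩, ?_⟩
    · intro k hk
      by_cases h : k ∈ Dset s l a
      · simp only [if_pos h]; exact hg.1 k h
      · simp only [if_neg h, dif_pos hk]
        exact (hne k (Dset_lt hk)).choose_spec
    · intro k hk
      simp only [if_neg fun h => hk (Dset_mono hab h), dif_neg hk]
    · funext k
      by_cases h : k ∈ Dset s l a
      · simp only [if_pos h]
      · simp only [if_neg h]
        exact (hg.2 k h).symm
  comp a b c hab hbc _ x hx := by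
    dsimp only
    funext k
    by_cases h : k ∈ Dset s l a
    · simp only [if_pos h, if_pos (Dset_mono hab h)]
    · simp only [if_neg h]

lemma U_normGe (i : ℕ → ℕ → ℕ → ℕ)
    (hpos : ∀ n l k, 0 < l → k < l → 0 < i n l k)
    (hpart : ∀ n l m, 0 < l → 0 < m → m ≤ l →
      ∀ F : ℕ → Finset ℕ, (∀ k, k < m → (F k).card = i (n + 1) l k) →
        ∀ X₀ X₁ : Set (ℕ → ℕ), prodSet F m ⊆ X₀ ∪ X₁ →
          ∃ E : ℕ → Finset ℕ,
            (∀ k, k < m → E k ⊆ F k ∧ (E k).card = i n l k) ∧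
            (prodSet E m ⊆ X₀ ∨ prodSet E m ⊆ X₁))
    (hgrow : ∀ n l k, 0 < l → k < l →
      i (n + 1) l k ≥ 2 ^ (∏ j ∈ Finset.range l, i n l j) + i n l k)
    (A : Finset ℕ) (l : ℕ) (hl0 : 0 < l)
    (s : ℕ → Finset ℕ)
    (hsenum : ∀ a, a ⊆ A → ∃ k, k < l ∧ s k = a) :
    ∀ n (F : ℕ → Finset ℕ), (∀ k, k < l → (F k).card = i n l k) →
      ∀ (hne : ∀ k, k < l → (F k).Nonempty), NormGe n (U s l A F hne) := by
  intro n
  induction n with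
  | zero => intro F _ hne; trivial
  | succ n IH =>
    intro F hF hne
    have hneE : ∀ (E : ℕ → Finset ℕ), (∀ k, k < l → (E k).card = i n l k) →
        ∀ k, k < l → (E k).Nonempty := fun E hE k hk =>
      Finset.card_pos.mp (by rw [hE k hk]; exact hpos n l k hl0 hk)
    constructor
    · -- cover condition
      intro a ha u0 u1 hcover
      set ρ : (ℕ → ℕ) → (ℕ → ℕ) := fun f k => if k ∈ Dset s l a then f k else 0 with hρ
      have hsub : prodSet F l ⊆ {f | ρ f ∈ u0} ∪ {f | ρ f ∈ u1} := by
        intro f hf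
        have hmem : ρ f ∈ prodOn F (Dset s l a) := by
          constructor
          · intro k hk
            simp only [hρ, if_pos hk]
            exact hf.1 k (Dset_lt hk)
          · intro k hk; simp only [hρ, if_neg hk]
        have hval : (U s l A F hne).val a = prodOn F (Dset s l a) := rfl
        rw [← hval, hcover] at hmem
        exact hmem
      obtain ⟨E, hE, hcase⟩ := hpart n l l hl0 hl0 le_rfl F hF _ _ hsub
      have hEcard : ∀ k, k < l → (E k).card = i n l k := fun k hk => (hE k hk).2
      have hEne := hneE E hEcard
      have key : ∀ (X : Set (ℕ → ℕ)), prodSet E l ⊆ {f | ρ f ∈ X} →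
          prodOn E (Dset s l a) ⊆ X := by
        intro X hX g hg
        have hfmem : (fun k => if k ∈ Dset s l a then g k else
            if h : k < l then (hEne k h).choose else 0) ∈ prodSet E l := by
          constructor
          · intro k hk
            by_cases h : k ∈ Dset s l a
            · simp only [if_pos h]; exact hg.1 k h
            · simp only [if_neg h, dif_pos hk]; exact (hEne k hk).choose_spec
          · intro k hk
            have h1 : k ∉ Dset s l a := fun h => absurd (Dset_lt h) (not_lt.mpr hk)
            simp only [if_neg h1, dif_neg (not_lt.mpr hk)]
        have heq : ρ (fun k => if k ∈ Dset s l a then g k else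
            if h : k < l then (hEne k h).choose else 0) = g := by
          funext k
          by_cases h : k ∈ Dset s l a
          · simp only [hρ, if_pos h]
          · simp only [hρ, if_neg h]; exact (hg.2 k h).symm
        have h2 : ρ (fun k => if k ∈ Dset s l a then g k else
            if h : k < l then (hEne k h).choose else 0) ∈ X := hX hfmem
        rwa [heq] at h2
      refine ⟨U s l A E hEne, ⟨?_, fun _ _ _ _ _ _ => rfl⟩, IH E hEcard hEne, ?_⟩
      · intro c hc
        exact prodOn_mono fun k hk => (hE k (Dset_lt hk)).1
      · rcases hcase with h | h
        · exact Or.inl (key u0 h)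
        · exact Or.inr (key u1 h)
    · -- avoiding condition
      intro a b ha hb hba G hG
      obtain ⟨κ, hκl, hκb⟩ := hsenum b hb
      have hκDb : κ ∈ Dset s l b := mem_Dset.mpr ⟨hκl, by rw [hκb]⟩
      have hκDa : κ ∉ Dset s l a := by
        rw [mem_Dset]
        rintro ⟨-, h⟩
        exact hba (hκb ▸ h)
      have hle : ∀ k, k < l → i n l k ≤ (F k).card := by
        intro k hk
        rw [hF k hk]
        exact le_trans (Nat.le_add_left _ _) (hgrow n l k hl0 hk)
      have hex : ∀ k, ∃ t : Finset ℕ, k < l → t ⊆ F k ∧ t.card = i n l k := by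
        intro k
        by_cases hk : k < l
        · obtain ⟨t, ht1, ht2⟩ := Finset.exists_subset_card_eq (hle k hk)
          exact ⟨t, fun _ => ⟨ht1, ht2⟩⟩
        · exact ⟨∅, fun h => absurd h hk⟩
      choose E₁ hE₁ using hex
      set P := ∏ j ∈ Finset.range l, i n l j with hP
      set S : Finset (ℕ → ℕ) := prodFin E₁ (Dset s l a) with hS
      have hScard : S.card ≤ P := by
        calc S.card ≤ ∏ k ∈ Dset s l a, (E₁ k).card := prodFin_card _ _
          _ = ∏ k ∈ Dset s l a, i n l k :=
              Finset.prod_congr rfl fun k hk => (hE₁ k (Dset_lt hk)).2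
          _ ≤ P := Finset.prod_le_prod_of_subset_of_one_le' (Dset_subset_range s l a)
              (fun k hk _ => hpos n l k hl0 (Finset.mem_range.mp hk))
      set B : Finset ℕ := S.powerset.image (fun t : Finset (ℕ → ℕ) => G (↑t : Set (ℕ → ℕ)) κ) with hB
      have hBcard : B.card ≤ 2 ^ P := by
        calc B.card ≤ S.powerset.card := Finset.card_image_le
          _ = 2 ^ S.card := Finset.card_powerset S
          _ ≤ 2 ^ P := Nat.pow_le_pow_right (by norm_num) hScard
      have hFκ : i n l κ ≤ (F κ \ B).card := by
        have h1 : (F κ).card ≤ (F κ \ B).card + B.card := Finset.card_le_card_sdiff_add_card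
        have h2 := hgrow n l κ hl0 hκl
        rw [← hP] at h2
        rw [hF κ hκl] at h1
        have h3 : i (n + 1) l κ ≤ (F κ \ B).card + 2 ^ P :=
          h1.trans (Nat.add_le_add_left hBcard _)
        omega
      obtain ⟨Eκ, hEκ1, hEκ2⟩ := Finset.exists_subset_card_eq hFκ
      set E : ℕ → Finset ℕ := fun k => if k = κ then Eκ else E₁ k with hEdef
      have hEcard : ∀ k, k < l → (E k).card = i n l k := by
        intro k hk
        by_cases h : k = κ
        · subst h; simp only [hEdef, if_pos rfl]; exact hEκ2
        · simp only [hEdef, if_neg h]; exact (hE₁ k hk).2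
      have hEsub : ∀ k, k < l → E k ⊆ F k := by
        intro k hk
        by_cases h : k = κ
        · subst h
          simp only [hEdef, if_pos rfl]
          exact hEκ1.trans (Finset.sdiff_subset)
        · simp only [hEdef, if_neg h]; exact (hE₁ k hk).1
      have hEne := hneE E hEcard
      refine ⟨U s l A E hEne, ⟨?_, fun _ _ _ _ _ _ => rfl⟩, IH E hEcard hEne, ?_⟩
      · intro c hc
        exact prodOn_mono fun k hk => hEsub k (Dset_lt hk)
      · intro t ht hmem
        have hmem' : G t ∈ prodOn E (Dset s l b) := hmem
        have hEa : prodOn E (Dset s l a) = ↑S := by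
          rw [hS, ← prodOn_eq_prodFin]
          apply prodOn_congr
          intro k hk
          have hk' : k ≠ κ := fun h => hκDa (h ▸ hk)
          simp only [hEdef, if_neg hk']
        have htS : t ⊆ ↑S := by
          intro f hf
          have := ht hf
          rw [show (U s l A E hEne).val a = prodOn E (Dset s l a) from rfl, hEa] at this
          exact this
        have htc : ↑(S.filter (· ∈ t)) = t := by
          ext f
          simp only [Finset.coe_filter, Set.mem_setOf_eq]
          constructor
          · rintro ⟨-, h⟩; exact h
          · intro h; exact ⟨htS h, h⟩
        have hGt : G t κ ∈ B := by
          rw [hB]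
          apply Finset.mem_image.mpr
          refine ⟨S.filter (· ∈ t), Finset.mem_powerset.mpr (Finset.filter_subset _ _), ?_⟩
          rw [htc]
        have hGE : G t κ ∈ E κ := hmem'.1 κ hκDb
        rw [hEdef] at hGE
        simp only [if_pos rfl] at hGE
        exact (Finset.mem_sdiff.mp (hEκ1 hGE)).2 hGt

/-- Given a function `i` satisfying the polarized partition property and the
growth estimate, a non-empty finite set `A` with `l = 2^{|A|}`, an enumeration
`⟨s k : k < l⟩` of the subsets of `A` such that `k' < k → s k ⊄ s k'`, and
finite sets `F k` with `|F k| = i n l k`, the structure with `u_a = ∏{F k : k ∈ D_a}`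
and `π_{u,b,a}(f) = f ↾ D_a` is a creature acting on `A` of norm at least `n`.
In particular, there are creatures acting on `A` of arbitrarily high norm. -/
theorem creature_of_products (i : ℕ → ℕ → ℕ → ℕ)
    (hpos : ∀ n l k, 0 < l → k < l → 0 < i n l k)
    (hpart : ∀ n l m, 0 < l → 0 < m → m ≤ l →
      ∀ F : ℕ → Finset ℕ, (∀ k, k < m → (F k).card = i (n + 1) l k) →
        ∀ X₀ X₁ : Set (ℕ → ℕ), prodSet F m ⊆ X₀ ∪ X₁ →
          ∃ E : ℕ → Finset ℕ,
            (∀ k, k < m → E k ⊆ F k ∧ (E k).card = i n l k) ∧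
            (prodSet E m ⊆ X₀ ∨ prodSet E m ⊆ X₁))
    (hgrow : ∀ n l k, 0 < l → k < l →
      i (n + 1) l k ≥ 2 ^ (∏ j ∈ Finset.range l, i n l j) + i n l k)
    (A : Finset ℕ) (hA : A.Nonempty) (l : ℕ) (hl : l = 2 ^ A.card)
    (s : ℕ → Finset ℕ)
    (hsA : ∀ k, k < l → s k ⊆ A)
    (hsenum : ∀ a, a ⊆ A → ∃ k, k < l ∧ s k = a)
    (hsinj : ∀ k k', k < l → k' < l → s k = s k' → k = k')
    (hsord : ∀ k' k, k' < k → k < l → ¬s k ⊆ s k')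
    (n : ℕ) (F : ℕ → Finset ℕ) (hF : ∀ k, k < l → (F k).card = i n l k) :
    (∃ u : Creature (ℕ → ℕ) A,
      (∀ a, a ⊆ A → u.val a = prodOn F (Dset s l a)) ∧
      (∀ a b, a ⊆ b → b ⊆ A → ∀ f ∈ u.val b,
        u.proj b a f = fun k => if k ∈ Dset s l a then f k else 0) ∧
      NormGe n u) ∧
    ∀ m : ℕ, ∃ w : Creature (ℕ → ℕ) A, NormGe m w := by

  have hl0 : 0 < l := by rw [hl]; positivity
  have main := U_normGe i hpos hpart hgrow A l hl0 s hsenum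
  have hne : ∀ k, k < l → (F k).Nonempty := fun k hk =>
    Finset.card_pos.mp (by rw [hF k hk]; exact hpos n l k hl0 hk)
  refine ⟨⟨U s l A F hne, fun a _ => rfl, fun a b _ _ f _ => rfl, main n F hF hne⟩, ?_⟩
  intro m
  have hF' : ∀ k, k < l → ((fun k => Finset.range (i m l k)) k).card = i m l k :=
    fun k _ => Finset.card_range _
  have hne' : ∀ k, k < l → ((fun k => Finset.range (i m l k)) k).Nonempty := fun k hk =>
    Finset.card_pos.mp (by rw [hF' k hk]; exact hpos m l k hl0 hk)
  exact ⟨U s l A (fun k => Finset.range (i m l k)) hne', main m _ hF' hne'⟩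
end

section
/- Let A and B be non-empty finite sets, h : B → A a surjection, u a creature acting on B, and v = h[u] the shifted creature acting on A (defined by v_a = u_{h⁻¹(a)} and π_{v,a*,a} = π_{u,h⁻¹(a*),h⁻¹(a)}). Then for every n ∈ ℕ, if nor(u) ≥ n then nor(v) ≥ n. -/
/-- The `h`-preimage of `a` inside `B`. -/
def preim (B : Finset ℕ) (h : ℕ → ℕ) (a : Finset ℕ) : Finset ℕ :=
  B.filter fun x => h x ∈ a

lemma preim_subset (B : Finset ℕ) (h : ℕ → ℕ) (a : Finset ℕ) : preim B h a ⊆ B :=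
  Finset.filter_subset _ _

lemma preim_mono (B : Finset ℕ) (h : ℕ → ℕ) {a b : Finset ℕ} (hab : a ⊆ b) :
    preim B h a ⊆ preim B h b := by
  intro x hx
  simp only [preim, Finset.mem_filter] at hx ⊢
  exact ⟨hx.1, hab hx.2⟩

/-- Shift of a creature on `B` to a creature on `A` along `h`. -/
def shiftC {α : Type*} (A : Finset ℕ) {B : Finset ℕ} (h : ℕ → ℕ) (w : Creature α B) :
    Creature α A where
  val a := w.val (preim B h a)
  proj b a := w.proj (preim B h b) (preim B h a)
  finite a _ := w.finite _ (preim_subset B h a)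
  nonempty a _ := w.nonempty _ (preim_subset B h a)
  mapsTo a b hab _ := w.mapsTo _ _ (preim_mono B h hab) (preim_subset B h b)
  surjOn a b hab _ := w.surjOn _ _ (preim_mono B h hab) (preim_subset B h b)
  comp a b c hab hbc _ x hx :=
    w.comp _ _ _ (preim_mono B h hab) (preim_mono B h hbc) (preim_subset B h c) x hx

lemma shift_subCreature {α : Type*} {A B : Finset ℕ} {h : ℕ → ℕ}
    {u : Creature α B} {v : Creature α A}
    (hval : ∀ a, a ⊆ A → v.val a = u.val (preim B h a))
    (hproj : ∀ a a', a ⊆ a' → a' ⊆ A → ∀ x ∈ v.val a',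
      v.proj a' a x = u.proj (preim B h a') (preim B h a) x)
    {w : Creature α B} (hw : SubCreature w u) : SubCreature (shiftC A h w) v := by
  constructor
  · intro a ha
    rw [hval a ha]
    exact hw.1 _ (preim_subset B h a)
  · intro a b hab hb x hx
    have hx' : x ∈ w.val (preim B h b) := hx
    have hxu : x ∈ v.val b := by
      rw [hval b hb]; exact hw.1 _ (preim_subset B h b) hx'
    rw [hproj a b hab hb x hxu]
    exact hw.2 _ _ (preim_mono B h hab) (preim_subset B h b) x hx'

theorem shift_norm_aux {α : Type*} (A B : Finset ℕ) (h : ℕ → ℕ)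
    (hsurj : ∀ y ∈ A, ∃ x ∈ B, h x = y) :
    ∀ n : ℕ, ∀ (u : Creature α B) (v : Creature α A),
    (∀ a, a ⊆ A → v.val a = u.val (preim B h a)) →
    (∀ a a', a ⊆ a' → a' ⊆ A → ∀ x ∈ v.val a',
      v.proj a' a x = u.proj (preim B h a') (preim B h a) x) →
    NormGe n u → NormGe n v
  | 0, _, _, _, _, _ => trivial
  | n + 1, u, v, hval, hproj, hu => by
    constructor
    · intro a ha u0 u1 hcov
      obtain ⟨w, hwsub, hwn, hwi⟩ :=
        hu.1 (preim B h a) (preim_subset B h a) u0 u1 (by rw [← hval a ha]; exact hcov)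
      refine ⟨shiftC A h w, shift_subCreature hval hproj hwsub, ?_, hwi⟩
      exact shift_norm_aux A B h hsurj n w (shiftC A h w)
        (fun _ _ => rfl) (fun _ _ _ _ _ _ => rfl) hwn
    · intro a b ha hb hnsub F hF
      have hnsub' : ¬ preim B h b ⊆ preim B h a := by
        obtain ⟨y, hyb, hya⟩ := Finset.not_subset.mp hnsub
        obtain ⟨x, hxB, hxy⟩ := hsurj y (hb hyb)
        intro hsub
        have hxb : x ∈ preim B h b := Finset.mem_filter.mpr ⟨hxB, hxy ▸ hyb⟩
        have := (Finset.mem_filter.mp (hsub hxb)).2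
        rw [hxy] at this
        exact hya this
      obtain ⟨w, hwsub, hwn, hwF⟩ :=
        hu.2 (preim B h a) (preim B h b) (preim_subset B h a) (preim_subset B h b)
          hnsub' F (by rw [← hval a ha, ← hval b hb]; exact hF)
      refine ⟨shiftC A h w, shift_subCreature hval hproj hwsub, ?_, fun t ht => hwF t ht⟩
      exact shift_norm_aux A B h hsurj n w (shiftC A h w)
        (fun _ _ => rfl) (fun _ _ _ _ _ _ => rfl) hwn

/-- If `v = h[u]` is the shift of the creature `u` along a surjection
`h : B → A` (i.e. `v_a = u_{h⁻¹(a)}` and `π_{v,a*,a} = π_{u,h⁻¹(a*),h⁻¹(a)}`),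
then `nor(u) ≥ n` implies `nor(v) ≥ n` for every `n`. -/
theorem shift_preserves_norm {α : Type*} (A B : Finset ℕ) (hA : A.Nonempty)
    (hB : B.Nonempty) (h : ℕ → ℕ)
    (hmaps : ∀ x ∈ B, h x ∈ A) (hsurj : ∀ y ∈ A, ∃ x ∈ B, h x = y)
    (u : Creature α B) (v : Creature α A)
    (hval : ∀ a, a ⊆ A → v.val a = u.val (preim B h a))
    (hproj : ∀ a a', a ⊆ a' → a' ⊆ A → ∀ x ∈ v.val a',
      v.proj a' a x = u.proj (preim B h a') (preim B h a) x) :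
    ∀ n : ℕ, NormGe n u → NormGe n v := by
  exact fun n => shift_norm_aux A B h hsurj n u v hval hproj
end

section
/- For directed quasi-orders D and E, there is a Tukey map f : D → E (a map sending every unbounded subset of D to an unbounded subset of E) if and only if there is a convergent map g : E → D (a map sending every cofinal subset of E to a cofinal subset of D). -/
/-- For directed quasi-orders `D` and `E`, there is a Tukey map `f : D → E`
(sending unbounded sets to unbounded sets) iff there is a convergent map
`g : E → D` (sending cofinal sets to cofinal sets). -/
theorem tukey_map_iff_convergent_map {D E : Type*} [Preorder D] [Preorder E]
    (hD : ∀ x y : D, ∃ z, x ≤ z ∧ y ≤ z) (hE : ∀ x y : E, ∃ z, x ≤ z ∧ y ≤ z) :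
    (∃ f : D → E, ∀ X : Set D,
      ¬(∃ b, ∀ x ∈ X, x ≤ b) → ¬(∃ b, ∀ y ∈ f '' X, y ≤ b)) ↔
    (∃ g : E → D, ∀ Y : Set E,
      (∀ y : E, ∃ x ∈ Y, y ≤ x) → ∀ d : D, ∃ x ∈ g '' Y, d ≤ x) := by
  constructor
  · rintro ⟨f, hf⟩
    by_cases hDe : Nonempty D
    · have key : ∀ e : E, ∃ b : D, ∀ d, f d ≤ e → d ≤ b := by
        intro e
        by_contra h
        push_neg at h
        refine hf {d | f d ≤ e} ?_ ⟨e, ?_⟩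
        · rintro ⟨b, hb⟩
          obtain ⟨d, hd1, hd2⟩ := h b
          exact hd2 (hb d hd1)
        · rintro y ⟨x, hx, rfl⟩
          exact hx
      choose g hg using key
      refine ⟨g, fun Y hY d => ?_⟩
      obtain ⟨y, hyY, hyd⟩ := hY (f d)
      exact ⟨g y, ⟨y, hyY, rfl⟩, hg y d hyd⟩
    · have hEe : ¬ Nonempty E := by
        rintro ⟨e⟩
        refine hf ∅ ?_ ⟨e, by simp⟩
        rintro ⟨b, -⟩
        exact hDe ⟨b⟩
      exact ⟨fun e => (hEe ⟨e⟩).elim, fun Y hY d => (hDe ⟨d⟩).elim⟩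
  · rintro ⟨g, hg⟩
    by_cases hDe : Nonempty D
    · have key : ∀ d : D, ∃ e : E, ∀ e', e ≤ e' → d ≤ g e' := by
        intro d
        by_contra h
        push_neg at h
        have hcof : ∀ y : E, ∃ x ∈ {e : E | ¬ d ≤ g e}, y ≤ x := by
          intro y
          obtain ⟨e', he1, he2⟩ := h y
          exact ⟨e', he2, he1⟩
        obtain ⟨x, ⟨e, he, rfl⟩, hdx⟩ := hg _ hcof d
        exact he hdx
      choose f hfp using key
      refine ⟨f, fun X hX hb => hX ?_⟩
      obtain ⟨b, hb⟩ := hb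
      exact ⟨g b, fun x hx => hfp x b (hb _ ⟨x, hx, rfl⟩)⟩
    · refine ⟨fun d => (hDe ⟨d⟩).elim, fun X hX hb => ?_⟩
      obtain ⟨b, -⟩ := hb
      exact hDe ⟨g b⟩
end

section
/- Suppose 𝒱 is a P-point ultrafilter on ω and 𝒰 is any ultrafilter on ω, and suppose φ : 𝒱 → 𝒰 is monotone and cofinal in 𝒰. Then there exist a set P of non-empty finite subsets of ω and a map f : P → ω such that: (1) P is an antichain under inclusion (s, t ∈ P and s ⊆ t imply s = t); (2) f is finite-to-one; (3) for every a ∈ 𝒱 and every b ∈ 𝒰 there exists s ∈ P with s ⊆ a and f(s) ∈ b. -/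
/-!
For a finite `s` call `x` forced by `s` if `x ∈ φ a` for every `a ∈ V` containing `s`. Each `x`
not forced by `s` is excluded by a single witness in `V`. A P-point fuses these countably many
witnesses into one `X ∈ V` with arbitrarily high levels `m` above which `X` lies inside all
witnesses for `s ⊆ [0, m]` and `x ≤ m`; so for `a ⊆ X` in `V` and `x ∈ φ a`, the part of `a`
below a level `ρ x ≥ x` already forces `x`. Let `P` consist of the inclusion-minimal nonempty `s`
forcing some `x` with `s ⊆ [0, ρ x]`, and `f s` be the least such `x`. The fibre of `f` over `n`
lies in the powerset of `[0, ρ n]`, and if `t ∈ P` lies in `a ∈ V` then `f t ∈ φ a`.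
-/

open Set Filter

def Ultrafilter.IsPPoint (V : Ultrafilter ℕ) : Prop :=
  ∀ g : ℕ → ℕ, ∃ A ∈ V, (∀ n : ℕ, (A ∩ g ⁻¹' {n}).Finite) ∨ ∃ c, ∀ x ∈ A, g x = c

namespace Ultrafilter

theorem IsPPoint.exists_mem_diff_finite {V : Ultrafilter ℕ} (hV : V.IsPPoint)
    (D : ℕ → Set ℕ) (hD : ∀ n, D n ∈ V) : ∃ X ∈ V, ∀ n, (X \ D n).Finite := by
  -- `x ∉ D n` forces `g x ≤ n`; the alternative `n = x` keeps the infimum over a nonempty set.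
  let g : ℕ → ℕ := fun x => sInf {n | n = x ∨ x ∉ D n}
  have hg : ∀ x, g x = x ∨ x ∉ D (g x) := fun x =>
    Nat.sInf_mem (s := {n | n = x ∨ x ∉ D n}) ⟨x, Or.inl rfl⟩
  obtain ⟨A, hA, hfin | ⟨c, hc⟩⟩ := hV g
  · refine ⟨A, hA, fun n => ((finite_Iic n).biUnion fun m _ => hfin m).subset ?_⟩
    rintro x ⟨hxA, hxD⟩
    exact mem_biUnion (Nat.sInf_le (Or.inr hxD) : g x ≤ n) ⟨hxA, rfl⟩
  · have hsub : A ∩ D c ⊆ {c} := by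
      rintro x ⟨hxA, hxD⟩
      rcases hg x with hx | hx <;> rw [hc x hxA] at hx
      · exact hx.symm
      · exact absurd hxD hx
    exact ⟨A ∩ D c, inter_mem hA (hD c), fun n => (finite_singleton c).subset
      (sdiff_subset.trans hsub)⟩

theorem exists_mem_disjoint_Ioo (V : Ultrafilter ℕ) (δ : ℕ → ℕ) :
    ∃ A ∈ V, ∀ n, ∃ m ≥ n, Disjoint A (Ioo m (δ m)) := by
  let y : ℕ → ℕ := fun k => (fun m => max (m + 1) (δ m))^[k] 0
  have hy_succ : ∀ k, y (k + 1) = max (y k + 1) (δ (y k)) := fun k =>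
    Function.iterate_succ_apply' _ k 0
  have hy : StrictMono y := strictMono_nat_of_lt_succ fun k => by rw [hy_succ]; omega
  have hδ : ∀ k, δ (y k) ≤ y (k + 1) := fun k => by rw [hy_succ]; omega
  -- Cut `ℕ` into the blocks `[y k, y (k + 1))`; the even blocks or the odd ones form a member.
  let E : Set ℕ := {w | ∃ j, y (2 * j) ≤ w ∧ w < y (2 * j + 1)}
  rcases V.mem_or_compl_mem E with hE | hE
  · refine ⟨E, hE, fun n => ⟨y (2 * n + 1), le_trans (by omega) hy.le_apply, ?_⟩⟩
    rw [disjoint_left]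
    rintro w ⟨j, hjw, hwj⟩ ⟨hnw, hwδ⟩
    have hnj : 2 * n + 1 < 2 * j + 1 := hy.lt_iff_lt.1 (hnw.trans hwj)
    have : y (2 * n + 2) ≤ y (2 * j) := hy.monotone (by omega)
    linarith [hδ (2 * n + 1)]
  · refine ⟨Eᶜ, hE, fun n => ⟨y (2 * n + 2), le_trans (by omega) hy.le_apply, ?_⟩⟩
    rw [disjoint_left]
    rintro w hwE ⟨hnw, hwδ⟩
    exact hwE ⟨n + 1, hnw.le, hwδ.trans_le (hδ _)⟩

theorem IsPPoint.exists_mem_inter_Ioi_subset {V : Ultrafilter ℕ} (hV : V.IsPPoint)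
    (D : ℕ → Set ℕ) (hD : ∀ n, D n ∈ V) : ∃ X ∈ V, ∀ n, ∃ m ≥ n, X ∩ Ioi m ⊆ D m := by
  obtain ⟨X, hX, hfin⟩ := hV.exists_mem_diff_finite D hD
  choose δ hδ using fun m => (hfin m).bddAbove
  obtain ⟨A, hA, hgap⟩ := V.exists_mem_disjoint_Ioo (fun m => δ m + 1)
  refine ⟨X ∩ A, inter_mem hX hA, fun n => ?_⟩
  obtain ⟨m, hnm, hm⟩ := hgap n
  refine ⟨m, hnm, fun w ⟨⟨hwX, hwA⟩, hmw⟩ => by_contra fun hwD => ?_⟩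
  exact disjoint_left.1 hm hwA ⟨hmw, Nat.lt_succ_of_le (hδ m ⟨hwX, hwD⟩)⟩

end Ultrafilter

theorem exists_antichain_selector {α : Type*} (F : Finset α → Set ℕ) (B : ℕ → Finset α) :
    ∃ (P : Set (Finset α)) (f : Finset α → ℕ),
      (∀ s ∈ P, s.Nonempty) ∧
      (∀ s ∈ P, ∀ t ∈ P, s ⊆ t → s = t) ∧
      (∀ n : ℕ, {s | s ∈ P ∧ f s = n}.Finite) ∧
      (∀ s ∈ P, f s ∈ F s) ∧
      ∀ s : Finset α, s.Nonempty → ∀ n ∈ F s, s ⊆ B n → ∃ t ∈ P, t ⊆ s := by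
  let P₀ : Set (Finset α) := {s | s.Nonempty ∧ ∃ n ∈ F s, s ⊆ B n}
  let f : Finset α → ℕ := fun s => sInf {n | n ∈ F s ∧ s ⊆ B n}
  have hf : ∀ s ∈ P₀, f s ∈ F s ∧ s ⊆ B (f s) := fun s hs => Nat.sInf_mem hs.2
  refine ⟨{s | Minimal (· ∈ P₀) s}, f, fun s hs => hs.prop.1,
    fun s hs t ht hst => ht.eq_of_le hs.prop hst, fun n => ?_, fun s hs => (hf s hs.prop).1,
    fun s hs n hn hsB => ?_⟩
  · refine (B n).powerset.finite_toSet.subset ?_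
    rintro s ⟨hs, rfl⟩
    exact Finset.mem_powerset.2 (hf s hs.prop).2
  · obtain ⟨t, hts, ht⟩ := exists_minimal_le_of_wellFoundedLT (· ∈ P₀) s ⟨hs, n, hn, hsB⟩
    exact ⟨t, ht, hts⟩

namespace LocalMap

variable {α β : Type*} (V : Ultrafilter α) (φ : Set α → Set β)

def forced (s : Finset α) : Set β := ⋂ (a ∈ V) (_ : ↑s ⊆ a), φ a

variable {V φ}

theorem forced_subset {s : Finset α} {a : Set α} (ha : a ∈ V) (hsa : ↑s ⊆ a) :
    forced V φ s ⊆ φ a :=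
  (iInter₂_subset a ha).trans (iInter_subset _ hsa)

theorem exists_witness (s : Finset α) (x : β) :
    ∃ a ∈ V, ↑s ⊆ a ∧ (x ∈ φ a → x ∈ forced V φ s) := by
  by_cases hx : x ∈ forced V φ s
  · exact ⟨univ, univ_mem, subset_univ _, fun _ => hx⟩
  · simp only [forced, mem_iInter, not_forall] at hx
    obtain ⟨a, ha, hsa, hxa⟩ := hx
    exact ⟨a, ha, hsa, fun h => absurd h hxa⟩

theorem exists_mem_forced_inter_Iic {V : Ultrafilter ℕ} (hV : V.IsPPoint)
    {φ : Set ℕ → Set ℕ} (hmono : ∀ a b, a ∈ V → b ∈ V → a ⊆ b → φ a ⊆ φ b) :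
    ∃ X ∈ V, ∃ ρ : ℕ → ℕ, (∀ n, n ≤ ρ n) ∧ ∀ a ∈ V, a ⊆ X → ∀ x ∈ φ a,
      ∃ s : Finset ℕ, ↑s = a ∩ Iic (ρ x) ∧ x ∈ forced V φ s := by
  choose W hWV hsW hW using exists_witness (V := V) (φ := φ)
  let D : ℕ → Set ℕ := fun m => ⋂ s ∈ (Finset.Iic m).powerset, ⋂ n ∈ Finset.Iic m, W s n
  have hD : ∀ m, D m ∈ V := fun m => (biInter_finset_mem _).2 fun s _ =>
    (biInter_finset_mem _).2 fun n _ => hWV s n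
  obtain ⟨X, hX, hgap⟩ := hV.exists_mem_inter_Ioi_subset D hD
  choose ρ hρ hρX using hgap
  refine ⟨X, hX, ρ, hρ, fun a ha haX x hx => ?_⟩
  have hfin : (a ∩ Iic (ρ x)).Finite := (finite_Iic _).subset inter_subset_right
  set s := hfin.toFinset
  have hs : s ⊆ Finset.Iic (ρ x) := fun w hw => by simpa using (hfin.mem_toFinset.1 hw).2
  -- Below `ρ x` the set `a` is `s`, above it `a ⊆ X` lies in `D (ρ x) ⊆ W s x`.
  have haW : a ⊆ W s x := by
    intro w hw
    by_cases hwρ : w ≤ ρ x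
    · exact hsW s x (hfin.mem_toFinset.2 ⟨hw, hwρ⟩)
    · have hwD := hρX x ⟨haX hw, not_le.1 hwρ⟩
      simp only [D, mem_iInter] at hwD
      exact hwD s (Finset.mem_powerset.2 hs) x (Finset.mem_Iic.2 (hρ x))
  exact ⟨s, hfin.coe_toFinset, hW s x (hmono _ _ ha (hWV s x) haW hx)⟩

end LocalMap

theorem local_map_lemma_general (U V : Ultrafilter ℕ)
    (hU : (U : Filter ℕ) ≤ Filter.cofinite)
    (hP : ∀ g : ℕ → ℕ, ∃ A ∈ V,
      (∀ n : ℕ, (A ∩ g ⁻¹' {n}).Finite) ∨ ∃ c, ∀ x ∈ A, g x = c)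
    (φ : Set ℕ → Set ℕ) (hmem : ∀ a ∈ V, φ a ∈ U)
    (hmono : ∀ a b, a ∈ V → b ∈ V → a ⊆ b → φ a ⊆ φ b)
    (hcof : ∀ b ∈ U, ∃ a ∈ V, φ a ⊆ b) :
    ∃ (P : Set (Finset ℕ)) (f : Finset ℕ → ℕ),
      (∀ s ∈ P, s.Nonempty) ∧
      (∀ s ∈ P, ∀ t ∈ P, s ⊆ t → s = t) ∧
      (∀ n : ℕ, {s | s ∈ P ∧ f s = n}.Finite) ∧
      (∀ a ∈ V, ∀ b ∈ U, ∃ s ∈ P, ↑s ⊆ a ∧ f s ∈ b) := by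
  obtain ⟨X, hX, ρ, hρ, hforced⟩ := LocalMap.exists_mem_forced_inter_Iic hP hmono
  obtain ⟨P, f, hne, hanti, hfin, hfP, hbelow⟩ :=
    exists_antichain_selector (LocalMap.forced V φ) (fun n => Finset.Iic (ρ n))
  refine ⟨P, f, hne, hanti, hfin, fun a ha b hb => ?_⟩
  obtain ⟨c, hc, hcb⟩ := hcof b hb
  have ha' : a ∩ c ∩ X ∈ V := inter_mem (inter_mem ha hc) hX
  obtain ⟨z, hz⟩ := V.nonempty_of_mem ha'
  have hzU : Ici z ∈ U := hU (Nat.cofinite_eq_atTop ▸ Ici_mem_atTop z)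
  obtain ⟨x, hx, hzx⟩ := U.nonempty_of_mem (inter_mem (hmem _ ha') hzU)
  obtain ⟨s, hs, hxs⟩ := hforced _ ha' inter_subset_right x hx
  have hsa : ↑s ⊆ a ∩ c ∩ X := hs ▸ inter_subset_left
  have hsρ : s ⊆ Finset.Iic (ρ x) := by
    rw [← Finset.coe_subset, hs, Finset.coe_Iic]
    exact inter_subset_right
  have hzs : z ∈ s := by
    rw [← Finset.mem_coe, hs]
    exact ⟨hz, le_trans hzx (hρ x)⟩
  obtain ⟨t, htP, hts⟩ := hbelow s ⟨z, hzs⟩ x hxs hsρ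
  have hta : ↑t ⊆ a ∩ c ∩ X := (Finset.coe_subset.2 hts).trans hsa
  refine ⟨t, htP, hta.trans (inter_subset_left.trans inter_subset_left), hcb ?_⟩
  have hac : a ∩ c ∩ X ⊆ c := inter_subset_left.trans inter_subset_right
  exact hmono _ _ ha' hc hac (LocalMap.forced_subset ha' hta (hfP t htP))

/-- Lemma on P-points: if `V` is a P-point, `U` any ultrafilter, and
`φ : V → U` is monotone and cofinal in `U`, then there are an inclusion
antichain `P` of non-empty finite subsets of `ω` and a finite-to-one map
`f : P → ω` such that for all `a ∈ V` and `b ∈ U` there is `s ∈ P`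
with `s ⊆ a` and `f s ∈ b`. -/
theorem local_map_lemma (U V : Ultrafilter ℕ)
    (hU : (U : Filter ℕ) ≤ Filter.cofinite) (hV : (V : Filter ℕ) ≤ Filter.cofinite)
    (hP : ∀ g : ℕ → ℕ, ∃ A ∈ V,
      (∀ n : ℕ, (A ∩ g ⁻¹' {n}).Finite) ∨ ∃ c, ∀ x ∈ A, g x = c)
    (φ : Set ℕ → Set ℕ) (hmem : ∀ a ∈ V, φ a ∈ U)
    (hmono : ∀ a b, a ∈ V → b ∈ V → a ⊆ b → φ a ⊆ φ b)
    (hcof : ∀ b ∈ U, ∃ a ∈ V, φ a ⊆ b) :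
    ∃ (P : Set (Finset ℕ)) (f : Finset ℕ → ℕ),
      (∀ s ∈ P, s.Nonempty) ∧
      (∀ s ∈ P, ∀ t ∈ P, s ⊆ t → s = t) ∧
      (∀ n : ℕ, {s | s ∈ P ∧ f s = n}.Finite) ∧
      (∀ a ∈ V, ∀ b ∈ U, ∃ s ∈ P, ↑s ⊆ a ∧ f s ∈ b) :=
  local_map_lemma_general U V hU hP φ hmem hmono hcof
end

section
/- If 𝒰 is a selective ultrafilter on ω and 𝒱 is an ultrafilter on ω with 𝒱 ≤_RK 𝒰, then 𝒱 ≡_RK 𝒰, i.e., selective ultrafilters are minimal in the Rudin-Keisler ordering. -/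
/-- Selective ultrafilters are Rudin-Keisler minimal: if `U` is selective and
`V ≤_RK U`, then `V ≡_RK U`. -/
theorem selective_rk_minimal (U V : Ultrafilter ℕ)
    (hU : (U : Filter ℕ) ≤ Filter.cofinite) (hV : (V : Filter ℕ) ≤ Filter.cofinite)
    (hsel : ∀ f : ℕ → ℕ, ∃ A ∈ U, Set.InjOn f A ∨ ∃ c, ∀ x ∈ A, f x = c)
    (h : ∃ f : ℕ → ℕ, ∀ a : Set ℕ, a ∈ V ↔ f ⁻¹' a ∈ U) :
    (∃ f : ℕ → ℕ, ∀ a : Set ℕ, a ∈ V ↔ f ⁻¹' a ∈ U) ∧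
    (∃ g : ℕ → ℕ, ∀ a : Set ℕ, a ∈ U ↔ g ⁻¹' a ∈ V) := by
  refine ⟨h, ?_⟩
  obtain ⟨f, hf⟩ := h
  obtain ⟨A, hA, hinj | ⟨c, hc⟩⟩ := hsel f
  · classical
    set g : ℕ → ℕ := fun y => if hy : ∃ x ∈ A, f x = y then hy.choose else 0 with hg
    have hgf : ∀ x ∈ A, g (f x) = x := by
      intro x hx
      have hex : ∃ x' ∈ A, f x' = f x := ⟨x, hx, rfl⟩
      simp only [hg, dif_pos hex]
      exact hinj hex.choose_spec.1 hx hex.choose_spec.2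
    refine ⟨g, fun a => ?_⟩
    have key : ∀ x ∈ A, x ∈ f ⁻¹' (g ⁻¹' a) ↔ x ∈ a := by
      intro x hx
      simp [Set.mem_preimage, hgf x hx]
    rw [hf]
    constructor
    · intro ha
      have : A ∩ a ⊆ f ⁻¹' (g ⁻¹' a) := fun x ⟨hx, hxa⟩ => (key x hx).mpr hxa
      exact Filter.mem_of_superset (U.inter_mem hA ha) this
    · intro ha
      have : A ∩ f ⁻¹' (g ⁻¹' a) ⊆ a := fun x ⟨hx, hxa⟩ => (key x hx).mp hxa
      exact Filter.mem_of_superset (U.inter_mem hA ha) this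
  · exfalso
    have h1 : f ⁻¹' {c} ∈ U := Filter.mem_of_superset hA (fun x hx => hc x hx)
    have h2 : ({c}ᶜ : Set ℕ) ∈ V := hV (Set.finite_singleton c).compl_mem_cofinite
    have h3 : f ⁻¹' {c}ᶜ ∈ U := (hf _).mp h2
    have := U.inter_mem h1 h3
    rw [← Set.preimage_inter, Set.inter_compl_self, Set.preimage_empty] at this
    exact U.empty_notMem this
end

section
/- If 𝒰 and 𝒱 are ultrafilters on ω, then 𝒰 ≡_RK 𝒱 if and only if there is a permutation f : ω → ω such that 𝒰 = {a ⊆ ω : f⁻¹(a) ∈ 𝒱}. -/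
open Function Set
open scoped Classical

section Fixed

variable (h : ℕ → ℕ)

/-- exit time from a set along iteration, 0 if never exits -/
noncomputable def exitT (D : Set ℕ) (n : ℕ) : ℕ :=
  if hx : ∃ k, h^[k] n ∉ D then Nat.find hx else 0

lemma exitT_succ {D : Set ℕ} {n : ℕ} (hn : n ∈ D)
    (hx : ∃ k, h^[k] n ∉ D) (hx' : ∃ k, h^[k] (h n) ∉ D) :
    exitT h D n = exitT h D (h n) + 1 := by
  rw [exitT, exitT, dif_pos hx, dif_pos hx']
  have h0 : Nat.find hx ≠ 0 := by
    intro h0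
    have := Nat.find_spec hx
    rw [h0] at this
    exact this hn
  obtain ⟨m, hm⟩ : ∃ m, Nat.find hx = m + 1 := ⟨Nat.find hx - 1, by omega⟩
  have hspec : h^[m] (h n) ∉ D := by
    have := Nat.find_spec hx
    rwa [hm, Function.iterate_succ_apply] at this
  have h1 : Nat.find hx' ≤ m := Nat.find_le hspec
  have h2 : m ≤ Nat.find hx' := by
    by_contra hlt
    push_neg at hlt
    have := Nat.find_min hx (by rw [hm]; omega : Nat.find hx' + 1 < Nat.find hx)
    rw [Function.iterate_succ_apply] at this
    exact this (Nat.find_spec hx')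
  omega

/-- least member of the iteration-equivalence class -/
noncomputable def rootOf (B : Set ℕ) (n : ℕ) : ℕ :=
  if hx : ∃ m, m ∈ B ∧ ∃ i j, h^[i] m = h^[j] n then Nat.find hx else 0

/-- 2-coloring of the forest -/
def colOf (B : Set ℕ) (n : ℕ) : Prop :=
  ∃ i j, h^[i] (rootOf h B n) = h^[j] n ∧ Even (i + j)

variable {h}

section Forest

variable {B : Set ℕ} (hB1 : ∀ n ∈ B, h n ∈ B) (hB2 : ∀ n ∈ B, n < h n)

include hB1 in
lemma iterB {n : ℕ} (hn : n ∈ B) : ∀ k, h^[k] n ∈ B := by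
  intro k
  induction k with
  | zero => exact hn
  | succ k ih => rw [Function.iterate_succ_apply']; exact hB1 _ ih

include hB1 hB2 in
lemma iter_inj {n : ℕ} (hn : n ∈ B) {i j : ℕ} (hij : h^[i] n = h^[j] n) : i = j := by
  have hmono : StrictMono (fun k => h^[k] n) := by
    apply strictMono_nat_of_lt_succ
    intro k
    rw [Function.iterate_succ_apply']
    exact hB2 _ (iterB hB1 hn k)
  exact hmono.injective hij

lemma rel_ex {n : ℕ} (hn : n ∈ B) : ∃ m, m ∈ B ∧ ∃ i j, h^[i] m = h^[j] n :=
  ⟨n, hn, 0, 0, rfl⟩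

lemma rootOf_spec {n : ℕ} (hn : n ∈ B) :
    rootOf h B n ∈ B ∧ ∃ i j, h^[i] (rootOf h B n) = h^[j] n := by
  rw [rootOf, dif_pos (rel_ex hn)]
  exact Nat.find_spec (rel_ex hn)

include hB1 in
lemma rootOf_succ {n : ℕ} (hn : n ∈ B) : rootOf h B (h n) = rootOf h B n := by
  have hx := rel_ex (h := h) hn
  have hx' := rel_ex (h := h) (hB1 n hn)
  rw [rootOf, rootOf, dif_pos hx', dif_pos hx]
  apply le_antisymm
  · apply Nat.find_le
    obtain ⟨hb, i, j, hij⟩ := Nat.find_spec hx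
    refine ⟨hb, i + 1, j, ?_⟩
    rw [Function.iterate_succ_apply' h i, hij, ← Function.iterate_succ_apply' h j]
    exact Function.iterate_succ_apply h j n
  · apply Nat.find_le
    obtain ⟨hb, i, j, hij⟩ := Nat.find_spec hx'
    rw [← Function.iterate_succ_apply h j n] at hij
    exact ⟨hb, i, j + 1, hij⟩

include hB1 hB2 in
lemma parity_unique {n : ℕ} (hn : n ∈ B) {i j i' j' : ℕ}
    (w1 : h^[i] (rootOf h B n) = h^[j] n) (w2 : h^[i'] (rootOf h B n) = h^[j'] n) :
    (Even (i + j) ↔ Even (i' + j')) := by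
  have hr : rootOf h B n ∈ B := (rootOf_spec hn).1
  have key : ∀ {a b a' b' : ℕ}, b ≤ b' →
      h^[a] (rootOf h B n) = h^[b] n → h^[a'] (rootOf h B n) = h^[b'] n →
      a' = (b' - b) + a := by
    intro a b a' b' hbb ha ha'
    have : h^[(b' - b) + a] (rootOf h B n) = h^[a'] (rootOf h B n) := by
      rw [Function.iterate_add_apply, ha, ← Function.iterate_add_apply,
        Nat.sub_add_cancel hbb, ha']
    exact (iter_inj hB1 hB2 hr this).symm
  rcases le_total j j' with hle | hle
  · have := key hle w1 w2
    rw [Nat.even_iff, Nat.even_iff]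
    omega
  · have := key hle w2 w1
    rw [Nat.even_iff, Nat.even_iff]
    omega

include hB1 hB2 in
lemma colOf_flip {n : ℕ} (hn : n ∈ B) : colOf h B (h n) ↔ ¬ colOf h B n := by
  obtain ⟨hr, i, j, w⟩ := rootOf_spec (h := h) hn
  have hrs := rootOf_succ hB1 hn
  by_cases hp : Even (i + j)
  · constructor
    · rintro ⟨i', j', w', hp'⟩
      rw [hrs] at w'
      rw [← Function.iterate_succ_apply h j' n] at w'
      intro _
      have hpu := parity_unique hB1 hB2 hn w w'
      simp only [Nat.even_iff] at hpu hp hp'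
      omega
    · intro hnc
      exact absurd ⟨i, j, w, hp⟩ hnc
  · constructor
    · intro _
      rintro ⟨i', j', w', hp'⟩
      have hpu := parity_unique hB1 hB2 hn w w'
      simp only [Nat.even_iff] at hpu hp hp'
      omega
    · intro _
      refine ⟨i + 1, j, ?_, ?_⟩
      · rw [hrs, Function.iterate_succ_apply' h i, w, ← Function.iterate_succ_apply' h j]
        exact Function.iterate_succ_apply h j n
      · simp only [Nat.even_iff] at hp ⊢
        omega

end Forest

lemma notMem_of_free (W : Ultrafilter ℕ) (hmap : ∀ a : Set ℕ, a ∈ W ↔ h ⁻¹' a ∈ W)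
    (P : Set ℕ) (hfree : ∀ n, n ∈ P → h n ∉ P) : P ∉ W := by
  intro hPW
  have h2 : h ⁻¹' P ∈ W := (hmap P).mp hPW
  obtain ⟨n, hn1, hn2⟩ := Filter.nonempty_of_mem (Filter.inter_mem hPW h2 : P ∩ h ⁻¹' P ∈ W)
  exact hfree n hn1 hn2

lemma ultrafilter_fixed (W : Ultrafilter ℕ) (h : ℕ → ℕ)
    (hmap : ∀ a : Set ℕ, a ∈ W ↔ h ⁻¹' a ∈ W) : {n | h n = n} ∈ W := by
  by_contra hc
  have hD : {n | h n = n}ᶜ ∈ W := Ultrafilter.compl_mem_iff_notMem.mpr hc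
  set D1 : Set ℕ := {n | h n < n} with hD1def
  set D2 : Set ℕ := {n | n < h n} with hD2def
  set B : Set ℕ := {n | ∀ k, h^[k] n ∈ D2} with hBdef
  have hB1 : ∀ n ∈ B, h n ∈ B := by
    intro n hn
    simp only [hBdef, Set.mem_setOf_eq] at hn ⊢
    intro k
    rw [← Function.iterate_succ_apply]
    exact hn (k + 1)
  have hB2 : ∀ n ∈ B, n < h n := by
    intro n hn
    simp only [hBdef, Set.mem_setOf_eq] at hn
    exact hn 0
  -- exit from D1 always exists
  have exit1 : ∀ n, ∃ k, h^[k] n ∉ D1 := by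
    intro n
    induction n using Nat.strong_induction_on with
    | _ n ih =>
      by_cases hn : n ∈ D1
      · obtain ⟨k, hk⟩ := ih (h n) hn
        exact ⟨k + 1, by rwa [Function.iterate_succ_apply]⟩
      · exact ⟨0, hn⟩
  set P1 : Set ℕ := {n | n ∈ D1 ∧ Even (exitT h D1 n)} with hP1
  set P2 : Set ℕ := {n | n ∈ D1 ∧ ¬ Even (exitT h D1 n)} with hP2
  set P3 : Set ℕ := {n | n ∈ D2 ∧ (∃ k, h^[k] n ∉ D2) ∧ Even (exitT h D2 n)} with hP3
  set P4 : Set ℕ := {n | n ∈ D2 ∧ (∃ k, h^[k] n ∉ D2) ∧ ¬ Even (exitT h D2 n)} with hP4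
  set P5 : Set ℕ := {n | n ∈ B ∧ colOf h B n} with hP5
  set P6 : Set ℕ := {n | n ∈ B ∧ ¬ colOf h B n} with hP6
  have cover : {n | h n = n}ᶜ ⊆ P1 ∪ P2 ∪ P3 ∪ P4 ∪ P5 ∪ P6 := by
    intro n hn
    simp only [mem_compl_iff, mem_setOf_eq] at hn
    rcases lt_or_gt_of_ne hn with hlt | hgt
    · -- n ∈ D1
      by_cases he : Even (exitT h D1 n)
      · exact Or.inl (Or.inl (Or.inl (Or.inl (Or.inl ⟨hlt, he⟩))))
      · exact Or.inl (Or.inl (Or.inl (Or.inl (Or.inr ⟨hlt, he⟩))))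
    · by_cases hex : ∃ k, h^[k] n ∉ D2
      · by_cases he : Even (exitT h D2 n)
        · exact Or.inl (Or.inl (Or.inl (Or.inr ⟨hgt, hex, he⟩)))
        · exact Or.inl (Or.inl (Or.inr ⟨hgt, hex, he⟩))
      · push_neg at hex
        by_cases hcc : colOf h B n
        · exact Or.inl (Or.inr ⟨hex, hcc⟩)
        · exact Or.inr ⟨hex, hcc⟩
  have hun : P1 ∪ P2 ∪ P3 ∪ P4 ∪ P5 ∪ P6 ∈ W := Filter.mem_of_superset hD cover
  have free1 : ∀ n, n ∈ P1 → h n ∉ P1 := by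
    rintro n ⟨hn, he⟩ ⟨hn', he'⟩
    have := exitT_succ h hn (exit1 n) (exit1 (h n))
    rw [Nat.even_iff] at he he'
    omega
  have free2 : ∀ n, n ∈ P2 → h n ∉ P2 := by
    rintro n ⟨hn, he⟩ ⟨hn', he'⟩
    have := exitT_succ h hn (exit1 n) (exit1 (h n))
    rw [Nat.even_iff] at he he'
    omega
  have free3 : ∀ n, n ∈ P3 → h n ∉ P3 := by
    rintro n ⟨hn, hx, he⟩ ⟨hn', hx', he'⟩
    have := exitT_succ h hn hx hx'
    rw [Nat.even_iff] at he he'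
    omega
  have free4 : ∀ n, n ∈ P4 → h n ∉ P4 := by
    rintro n ⟨hn, hx, he⟩ ⟨hn', hx', he'⟩
    have := exitT_succ h hn hx hx'
    rw [Nat.even_iff] at he he'
    omega
  have free5 : ∀ n, n ∈ P5 → h n ∉ P5 := by
    rintro n ⟨hn, hc⟩ ⟨hn', hc'⟩
    exact (colOf_flip hB1 hB2 hn).mp hc' hc
  have free6 : ∀ n, n ∈ P6 → h n ∉ P6 := by
    rintro n ⟨hn, hc⟩ ⟨hn', hc'⟩
    exact hc' ((colOf_flip hB1 hB2 hn).mpr hc)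
  rcases (Ultrafilter.union_mem_iff.mp hun) with hh | hh
  rcases (Ultrafilter.union_mem_iff.mp hh) with hh | hh
  rcases (Ultrafilter.union_mem_iff.mp hh) with hh | hh
  rcases (Ultrafilter.union_mem_iff.mp hh) with hh | hh
  rcases (Ultrafilter.union_mem_iff.mp hh) with hh | hh
  · exact notMem_of_free W hmap P1 free1 hh
  · exact notMem_of_free W hmap P2 free2 hh
  · exact notMem_of_free W hmap P3 free3 hh
  · exact notMem_of_free W hmap P4 free4 hh
  · exact notMem_of_free W hmap P5 free5 hh
  · exact notMem_of_free W hmap P6 free6 hh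

end Fixed

lemma mem_iff_of_eqOn (V : Ultrafilter ℕ) {A s t : Set ℕ} (hA : A ∈ V)
    (hst : ∀ n ∈ A, (n ∈ s ↔ n ∈ t)) : s ∈ V ↔ t ∈ V := by
  constructor
  · intro hs
    exact Filter.mem_of_superset (Filter.inter_mem hs hA)
      (fun n hn => (hst n hn.2).mp hn.1)
  · intro ht
    exact Filter.mem_of_superset (Filter.inter_mem ht hA)
      (fun n hn => (hst n hn.2).mpr hn.1)

lemma exists_split (W : Ultrafilter ℕ) :
    ∃ S : Set ℕ, S ∈ W ∧ S.Infinite ∧ Sᶜ.Infinite := by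
  have hev : ({n : ℕ | Even n}).Infinite :=
    Set.infinite_of_injective_forall_mem (f := fun k : ℕ => 2 * k)
      (by intro a b hab; simp only [] at hab; omega)
      (fun k => by simp only [Set.mem_setOf_eq, Nat.even_iff]; omega)
  have hodd : ({n : ℕ | Even n}ᶜ).Infinite :=
    Set.infinite_of_injective_forall_mem (f := fun k : ℕ => 2 * k + 1)
      (by intro a b hab; simp only [] at hab; omega)
      (fun k => by simp only [mem_compl_iff, mem_setOf_eq, Nat.even_iff]; omega)
  rcases W.mem_or_compl_mem {n : ℕ | Even n} with hm | hm
  · exact ⟨{n : ℕ | Even n}, hm, hev, hodd⟩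
  · exact ⟨{n : ℕ | Even n}ᶜ, hm, hodd, by rwa [compl_compl]⟩

lemma inf_of_mem (W : Ultrafilter ℕ) (hW : (W : Filter ℕ) ≤ Filter.cofinite)
    {A : Set ℕ} (hA : A ∈ W) : A.Infinite := by
  intro hfin
  have : Aᶜ ∈ W := hW hfin.compl_mem_cofinite
  exact (Ultrafilter.compl_mem_iff_notMem.mp this) hA

/-- For ultrafilters `U, V` on `ω`: `U ≡_RK V` (both `U ≤_RK V` and `V ≤_RK U`)
iff there is a permutation `f` of `ω` with `U = {a : f⁻¹(a) ∈ V}`. -/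
theorem rk_equiv_iff_permutation (U V : Ultrafilter ℕ)
    (hU : (U : Filter ℕ) ≤ Filter.cofinite) (hV : (V : Filter ℕ) ≤ Filter.cofinite) :
    ((∃ f : ℕ → ℕ, ∀ a : Set ℕ, a ∈ U ↔ f ⁻¹' a ∈ V) ∧
     (∃ g : ℕ → ℕ, ∀ a : Set ℕ, a ∈ V ↔ g ⁻¹' a ∈ U)) ↔
    ∃ f : ℕ → ℕ, Function.Bijective f ∧ ∀ a : Set ℕ, a ∈ U ↔ f ⁻¹' a ∈ V := by
  classical
  constructor
  · rintro ⟨⟨f, hf⟩, ⟨g, hg⟩⟩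
    -- composite fixes V
    have hmap : ∀ a : Set ℕ, a ∈ V ↔ (g ∘ f) ⁻¹' a ∈ V := by
      intro a
      rw [Set.preimage_comp]
      exact (hg a).trans (hf (g ⁻¹' a))
    have hfix : {n | g (f n) = n} ∈ V := ultrafilter_fixed V (g ∘ f) hmap
    obtain ⟨S, hSV, _, hScinf⟩ := exists_split V
    obtain ⟨T, hTU, _, hTcinf⟩ := exists_split U
    set A : Set ℕ := {n | g (f n) = n} ∩ S ∩ f ⁻¹' T with hAdef
    have hAV : A ∈ V :=
      Filter.inter_mem (Filter.inter_mem hfix hSV) ((hf T).mp hTU)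
    have hinj : Set.InjOn f A := by
      intro a ha b hb hab
      have h1 : g (f a) = a := ha.1.1
      have h2 : g (f b) = b := hb.1.1
      rw [← h1, ← h2, hab]
    -- complements infinite
    have hAcinf : (Aᶜ).Infinite := by
      apply hScinf.mono
      intro n hn hna
      exact hn hna.1.2
    have hfAcinf : ((f '' A)ᶜ).Infinite := hTcinf.mono (by
      intro n hn hnf
      obtain ⟨a, ha, rfl⟩ := hnf
      exact hn ha.2)
    haveI : Infinite ↥(Aᶜ) := hAcinf.to_subtype
    haveI : Infinite ↥((f '' A)ᶜ) := hfAcinf.to_subtype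
    obtain ⟨e2⟩ : Nonempty (↥(Aᶜ) ≃ ↥((f '' A)ᶜ)) := inferInstance
    set e1 : ↥A ≃ ↥(f '' A) := Equiv.Set.imageOfInjOn f A hinj with he1
    set F : ℕ ≃ ℕ :=
      ((Equiv.Set.sumCompl A).symm.trans ((e1.sumCongr e2).trans
        (Equiv.Set.sumCompl (f '' A)))) with hF
    have hFA : ∀ n ∈ A, F n = f n := by
      intro n hn
      simp only [hF, Equiv.trans_apply]
      rw [Equiv.Set.sumCompl_symm_apply_of_mem hn]
      rfl
    refine ⟨F, F.bijective, ?_⟩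
    intro a
    rw [hf a]
    exact (mem_iff_of_eqOn V hAV (fun n hn => by
      simp only [Set.mem_preimage, hFA n hn])).symm
  · rintro ⟨f, hbij, hf⟩
    refine ⟨⟨f, hf⟩, ?_⟩
    set e : ℕ ≃ ℕ := Equiv.ofBijective f hbij with he
    refine ⟨⇑e.symm, ?_⟩
    intro a
    rw [hf (⇑e.symm ⁻¹' a)]
    have : f ⁻¹' (⇑e.symm ⁻¹' a) = a := by
      ext x
      simp only [Set.mem_preimage]
      have : e.symm (f x) = x := e.symm_apply_apply x
      rw [this]
    rw [this]
end
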